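/- arXiv:1810.05279 — 2 statements merged into one kernel-verified Lean document; each statement's English description precedes it below -/
import Mathlib

section
/- Let G be the niche graph of a bipartite tournament D with bipartition (U,V), and suppose the induced subgraph G[U] has exactly two connected components X₁ and X₂. Then X₁ and X₂ are complete graphs, and for any x ∈ V(X₁) and y ∈ V(X₂), V(X₁) = {z ∈ V(D) : N⁺_D(z) = N⁺_D(x)} and V(X₂) = {z ∈ V(D) : N⁺_D(z) = N⁺_D(y)}. -/
structure BipTournament (α : Type*) where
  U : Set α
  V : Set α
  A : α → α → Prop
  disj : Disjoint U V
  cover : U ∪ V = Set.univ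
  orient : ∀ u ∈ U, ∀ v ∈ V, Xor' (A u v) (A v u)
  arcs : ∀ x y, A x y → (x ∈ U ∧ y ∈ V) ∨ (x ∈ V ∧ y ∈ U)

def BipTournament.outN {α : Type*} (D : BipTournament α) (x : α) : Set α := {y | D.A x y}

def BipTournament.inN {α : Type*} (D : BipTournament α) (x : α) : Set α := {y | D.A y x}

def BipTournament.niche {α : Type*} (D : BipTournament α) : SimpleGraph α where
  Adj x y := x ≠ y ∧ ((∃ w, D.A x w ∧ D.A y w) ∨ (∃ w, D.A w x ∧ D.A w y))
  symm := by
    constructor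
    rintro x y ⟨h, h'⟩
    exact ⟨h.symm, h'.imp (fun ⟨w, a, b⟩ => ⟨w, b, a⟩) (fun ⟨w, a, b⟩ => ⟨w, b, a⟩)⟩
  loopless := ⟨fun x h => h.1 rfl⟩

/-!
If `x, y ∈ U` are not adjacent in the niche graph, they have no common out-neighbour and, since
every `w ∈ V` is joined to both by an arc, no common in-neighbour either: their out-neighbourhoods
are complementary in `V`. So when `U = S₁ ∪ S₂` with no edge between the parts, all vertices of
`S₁` have the same out-neighbourhood, namely the complement of that of any vertex of `S₂`, and
vice versa. Equal out-neighbourhoods make distinct vertices of `U` adjacent (`V ≠ ∅`), while the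
complementary ones of `S₁` and `S₂` differ, so each `Sᵢ` is a clique and an out-neighbourhood
class.
-/

namespace BipTournament

variable {α : Type*} (D : BipTournament α) {x y z w : α}

theorem not_A_self : ¬ D.A x x := fun h =>
  (D.arcs x x h).elim (fun ⟨hU, hV⟩ => D.disj.ne_of_mem hU hV rfl)
    (fun ⟨hV, hU⟩ => D.disj.ne_of_mem hU hV rfl)

theorem mem_V_of_A (hx : x ∈ D.U) (h : D.A x w) : w ∈ D.V :=
  (D.arcs x w h).elim And.right (fun ⟨hV, _⟩ => absurd rfl (D.disj.ne_of_mem hx hV))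

theorem A_iff_not_A (hx : x ∈ D.U) (hw : w ∈ D.V) : D.A w x ↔ ¬ D.A x w :=
  (xor_iff_not_iff'.mp (D.orient x hx w hw)).symm

theorem A_iff_not_A_of_not_niche_adj (hx : x ∈ D.U) (hy : y ∈ D.U) (hxy : x ≠ y)
    (hadj : ¬ D.niche.Adj x y) (hw : w ∈ D.V) : D.A x w ↔ ¬ D.A y w := by
  have hout : ¬ (D.A x w ∧ D.A y w) := fun h => hadj ⟨hxy, .inl ⟨w, h⟩⟩
  have hin : ¬ (D.A w x ∧ D.A w y) := fun h => hadj ⟨hxy, .inr ⟨w, h⟩⟩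
  rw [D.A_iff_not_A hx hw, D.A_iff_not_A hy hw] at hin
  tauto

theorem outN_eq_of_not_niche_adj (hx : x ∈ D.U) (hy : y ∈ D.U) (hz : z ∈ D.U)
    (hxy : x ≠ y) (hzy : z ≠ y) (hxy' : ¬ D.niche.Adj x y) (hzy' : ¬ D.niche.Adj z y) :
    D.outN x = D.outN z := by
  ext w
  by_cases hw : w ∈ D.V
  · exact (D.A_iff_not_A_of_not_niche_adj hx hy hxy hxy' hw).trans
      (D.A_iff_not_A_of_not_niche_adj hz hy hzy hzy' hw).symm
  · exact iff_of_false (fun h => hw (D.mem_V_of_A hx h)) (fun h => hw (D.mem_V_of_A hz h))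

theorem niche_adj_of_outN_eq (hV : D.V.Nonempty) (hx : x ∈ D.U) (hy : y ∈ D.U) (hxy : x ≠ y)
    (h : D.outN x = D.outN y) : D.niche.Adj x y := by
  obtain ⟨w, hw⟩ := hV
  have hA : D.A x w ↔ D.A y w := Set.ext_iff.mp h w
  by_cases hxw : D.A x w
  · exact ⟨hxy, .inl ⟨w, hxw, hA.mp hxw⟩⟩
  · have hwx : D.A w x := (D.A_iff_not_A hx hw).mpr hxw
    have hwy : D.A w y := (D.A_iff_not_A hy hw).mpr (hA.not.mp hxw)
    exact ⟨hxy, .inr ⟨w, hwx, hwy⟩⟩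

theorem mem_U_of_outN_eq (hx : x ∈ D.U) (h : D.outN z = D.outN x) : z ∈ D.U := by
  have hA : ∀ w, D.A z w ↔ D.A x w := fun w => Set.ext_iff.mp h w
  rcases Set.eq_univ_iff_forall.mp D.cover z with hz | hz
  · exact hz
  · exact ((D.orient x hx z hz).elim (fun ⟨hxz, _⟩ => D.not_A_self ((hA z).mpr hxz))
      (fun ⟨hzx, _⟩ => D.not_A_self ((hA x).mp hzx))).elim

theorem setOf_outN_eq_of_separated {S T : Set α} (hV : D.V.Nonempty) (hT : T.Nonempty)
    (hST : Disjoint S T) (hcup : S ∪ T = D.U) (hno : ∀ x ∈ S, ∀ y ∈ T, ¬ D.niche.Adj x y)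
    (hx : x ∈ S) : {z | D.outN z = D.outN x} = S := by
  obtain ⟨y, hy⟩ := hT
  have hSU : S ⊆ D.U := hcup ▸ Set.subset_union_left
  have hTU : T ⊆ D.U := hcup ▸ Set.subset_union_right
  ext z
  refine ⟨fun hz => ?_, fun hz => ?_⟩
  · have hzU : z ∈ S ∪ T := hcup ▸ D.mem_U_of_outN_eq (hSU hx) hz
    refine hzU.resolve_right fun hzT => hno x hx z hzT ?_
    exact D.niche_adj_of_outN_eq hV (hSU hx) (hTU hzT) (hST.ne_of_mem hx hzT) hz.symm
  · exact D.outN_eq_of_not_niche_adj (hSU hz) (hTU hy) (hSU hx) (hST.ne_of_mem hz hy)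
      (hST.ne_of_mem hx hy) (hno z hz y hy) (hno x hx y hy)

theorem niche_adj_of_separated {S T : Set α} (hV : D.V.Nonempty) (hT : T.Nonempty)
    (hST : Disjoint S T) (hcup : S ∪ T = D.U) (hno : ∀ x ∈ S, ∀ y ∈ T, ¬ D.niche.Adj x y)
    (hx : x ∈ S) (hy : y ∈ S) (hxy : x ≠ y) : D.niche.Adj x y := by
  have hSU : S ⊆ D.U := hcup ▸ Set.subset_union_left
  refine D.niche_adj_of_outN_eq hV (hSU hx) (hSU hy) hxy ?_
  have hyx : D.outN y = D.outN x := (D.setOf_outN_eq_of_separated hV hT hST hcup hno hx).ge hy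
  exact hyx.symm

end BipTournament

theorem stmt14_general {α : Type*} (D : BipTournament α) (hV : D.V.Nonempty)
    (S₁ S₂ : Set α) (h1 : S₁.Nonempty) (h2 : S₂.Nonempty) (hdisj : Disjoint S₁ S₂)
    (hcup : S₁ ∪ S₂ = D.U)
    (hno : ∀ x ∈ S₁, ∀ y ∈ S₂, ¬ D.niche.Adj x y) :
    (∀ x ∈ S₁, ∀ y ∈ S₁, x ≠ y → D.niche.Adj x y) ∧
    (∀ x ∈ S₂, ∀ y ∈ S₂, x ≠ y → D.niche.Adj x y) ∧
    (∀ x ∈ S₁, ∀ y ∈ S₂,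
      S₁ = {z | D.outN z = D.outN x} ∧ S₂ = {z | D.outN z = D.outN y}) := by
  have hcup' : S₂ ∪ S₁ = D.U := Set.union_comm S₁ S₂ ▸ hcup
  have hno' : ∀ y ∈ S₂, ∀ x ∈ S₁, ¬ D.niche.Adj y x :=
    fun y hy x hx h => hno x hx y hy h.symm
  exact ⟨fun x hx y hy => D.niche_adj_of_separated hV h2 hdisj hcup hno hx hy,
    fun x hx y hy => D.niche_adj_of_separated hV h1 hdisj.symm hcup' hno' hx hy,
    fun x hx y hy => ⟨(D.setOf_outN_eq_of_separated hV h2 hdisj hcup hno hx).symm,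
      (D.setOf_outN_eq_of_separated hV h1 hdisj.symm hcup' hno' hy).symm⟩⟩

theorem stmt14 {α : Type*} (D : BipTournament α) (hU : D.U.Nonempty) (hV : D.V.Nonempty)
    (S₁ S₂ : Set α) (h1 : S₁.Nonempty) (h2 : S₂.Nonempty) (hdisj : Disjoint S₁ S₂)
    (hcup : S₁ ∪ S₂ = D.U)
    (hno : ∀ x ∈ S₁, ∀ y ∈ S₂, ¬ D.niche.Adj x y)
    (hc1 : (D.niche.induce S₁).Connected) (hc2 : (D.niche.induce S₂).Connected) :
    (∀ x ∈ S₁, ∀ y ∈ S₁, x ≠ y → D.niche.Adj x y) ∧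
    (∀ x ∈ S₂, ∀ y ∈ S₂, x ≠ y → D.niche.Adj x y) ∧
    (∀ x ∈ S₁, ∀ y ∈ S₂,
      S₁ = {z | D.outN z = D.outN x} ∧ S₂ = {z | D.outN z = D.outN y}) :=
  stmt14_general D hV S₁ S₂ h1 h2 hdisj hcup hno
end

section
/- A graph G with exactly three or exactly four connected components is the niche graph of some bipartite tournament if and only if every connected component of G is a complete graph. -/
/-!
Within one part of a bipartite tournament, two distinct vertices are non-adjacent in the niche
graph exactly when they send arcs to complementary subsets of the other part. Hence a part has no
three pairwise non-adjacent vertices.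

Suppose a component contains non-adjacent `x, y ∈ U`. Then all of `U` lies in that component, so
any further component meets only `V`. If there were two further components, containing `v₁` and
`v₂`, then every `v ∈ V` would arc into `U` either exactly like `v₁` or exactly opposite to it; so
whether `v₁ → u` holds cannot change along a niche edge of `U`, and it would agree at `x` and `y`,
which is impossible for complementary `x` and `y`. Thus there are at most two components.

Conversely, label the cliques injectively by `Fin 4`, using the labels `1` and `2`, put the even
labels in `U` and the odd ones in `V`, and let every arc go from label `i` to label `i + 1`.
-/

namespace BipTournament

variable {α : Type*} (D : BipTournament α)

theorem mem_U_or_mem_V (a : α) : a ∈ D.U ∨ a ∈ D.V :=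
  (Set.mem_union a D.U D.V).1 (D.cover ▸ Set.mem_univ a)

theorem notMem_V_of_mem_U {a : α} (ha : a ∈ D.U) : a ∉ D.V :=
  Set.disjoint_left.1 D.disj ha

theorem mem_V_of_arc_of_mem_U {u w : α} (hu : u ∈ D.U) (h : D.A u w) : w ∈ D.V :=
  (D.arcs u w h).elim And.right fun h' => absurd h'.1 (D.notMem_V_of_mem_U hu)

theorem mem_V_of_arc_to_mem_U {u w : α} (hu : u ∈ D.U) (h : D.A w u) : w ∈ D.V :=
  (D.arcs w u h).elim (fun h' => absurd h'.2 (D.notMem_V_of_mem_U hu)) And.left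

theorem arc_iff_not_arc {u v : α} (hu : u ∈ D.U) (hv : v ∈ D.V) : D.A v u ↔ ¬ D.A u v :=
  (xor_iff_not_iff'.1 (D.orient u hu v hv)).symm

def swap : BipTournament α where
  U := D.V
  V := D.U
  A := D.A
  disj := D.disj.symm
  cover := Set.union_comm D.U D.V ▸ D.cover
  orient u hu v hv := (D.orient v hv u hu).symm
  arcs x y h := (D.arcs x y h).symm

variable {D}

theorem niche_adj_iff {x y : α} (hx : x ∈ D.U) (hy : y ∈ D.U) :
    D.niche.Adj x y ↔ x ≠ y ∧ ∃ v ∈ D.V, (D.A x v ↔ D.A y v) := by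
  refine and_congr_right fun _ => ⟨?_, ?_⟩
  · rintro (⟨v, hxv, hyv⟩ | ⟨v, hvx, hvy⟩)
    · exact ⟨v, D.mem_V_of_arc_of_mem_U hx hxv, iff_of_true hxv hyv⟩
    · have hv := D.mem_V_of_arc_to_mem_U hx hvx
      refine ⟨v, hv, ?_⟩
      rw [D.arc_iff_not_arc hx hv] at hvx
      rw [D.arc_iff_not_arc hy hv] at hvy
      exact iff_of_false hvx hvy
  · rintro ⟨v, hv, hxy⟩
    by_cases hxv : D.A x v
    · exact .inl ⟨v, hxv, hxy.1 hxv⟩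
    · exact .inr ⟨v, (D.arc_iff_not_arc hx hv).2 hxv,
        (D.arc_iff_not_arc hy hv).2 (hxy.not.1 hxv)⟩

theorem arc_iff_not_arc_of_not_niche_adj {x y v : α} (hx : x ∈ D.U) (hy : y ∈ D.U) (hxy : x ≠ y)
    (h : ¬ D.niche.Adj x y) (hv : v ∈ D.V) : D.A x v ↔ ¬ D.A y v := by
  rw [niche_adj_iff hx hy] at h
  exact xor_iff_iff_not.1 ((xor_iff_not_iff _ _).2 fun hxy' => h ⟨hxy, v, hv, hxy'⟩)

theorem arc_iff_not_arc_of_not_niche_reachable {x y v : α} (hx : x ∈ D.U) (hy : y ∈ D.U)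
    (h : ¬ D.niche.Reachable x y) (hv : v ∈ D.V) : D.A x v ↔ ¬ D.A y v :=
  arc_iff_not_arc_of_not_niche_adj hx hy (by rintro rfl; exact h .rfl) (fun h' => h h'.reachable) hv

theorem mem_U_of_niche_adj {x y : α} (hx : x ∈ D.U) (h : D.niche.Adj x y) : y ∈ D.U := by
  obtain ⟨-, ⟨w, hxw, hyw⟩ | ⟨w, hwx, hwy⟩⟩ := h
  · exact ((D.arcs y w hyw).resolve_right fun h' =>
      D.notMem_V_of_mem_U h'.2 (D.mem_V_of_arc_of_mem_U hx hxw)).1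
  · exact ((D.arcs w y hwy).resolve_left fun h' =>
      D.notMem_V_of_mem_U h'.1 (D.mem_V_of_arc_to_mem_U hx hwx)).2

theorem mem_U_of_niche_reachable {x y : α} (hx : x ∈ D.U) (h : D.niche.Reachable x y) :
    y ∈ D.U := by
  rw [SimpleGraph.reachable_iff_reflTransGen] at h
  induction h with
  | refl => exact hx
  | tail _ hbc ih => exact mem_U_of_niche_adj ih hbc

theorem niche_adj_of_not_niche_adj (hV : D.V.Nonempty) {x y z : α} (hx : x ∈ D.U) (hy : y ∈ D.U)
    (hz : z ∈ D.U) (hxy : x ≠ y) (hxz : x ≠ z) (hyz : y ≠ z) (h₁ : ¬ D.niche.Adj x y)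
    (h₂ : ¬ D.niche.Adj x z) : D.niche.Adj y z := by
  obtain ⟨v, hv⟩ := hV
  have hy' := arc_iff_not_arc_of_not_niche_adj hx hy hxy h₁ hv
  have hz' := arc_iff_not_arc_of_not_niche_adj hx hz hxz h₂ hv
  exact (niche_adj_iff hy hz).2 ⟨hyz, v, hv, by tauto⟩

theorem arc_iff_of_niche_adj {v₁ v₂ u w : α} (hv₁ : v₁ ∈ D.V) (hv₂ : v₂ ∈ D.V)
    (h₁₂ : ¬ D.niche.Reachable v₁ v₂) (h : D.niche.Adj u w) : D.A v₁ u ↔ D.A v₁ w := by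
  rcases D.mem_U_or_mem_V u with hu | hu
  · have hw := mem_U_of_niche_adj hu h
    obtain ⟨-, v, hv, huw⟩ := (niche_adj_iff hu hw).1 h
    have hvu := D.arc_iff_not_arc hu hv
    have hvw := D.arc_iff_not_arc hw hv
    -- `v` is cut off from `v₁` or from `v₂`, so it arcs into `U` opposite to `v₁` or like `v₁`
    by_cases h₁ : D.niche.Reachable v₁ v
    · have h₂ : ¬ D.niche.Reachable v v₂ := fun h₂ => h₁₂ (h₁.trans h₂)
      have := D.swap.arc_iff_not_arc_of_not_niche_reachable hv hv₂ h₂ hu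
      have := D.swap.arc_iff_not_arc_of_not_niche_reachable hv hv₂ h₂ hw
      have := D.swap.arc_iff_not_arc_of_not_niche_reachable hv₁ hv₂ h₁₂ hu
      have := D.swap.arc_iff_not_arc_of_not_niche_reachable hv₁ hv₂ h₁₂ hw
      tauto
    · have := D.swap.arc_iff_not_arc_of_not_niche_reachable hv₁ hv h₁ hu
      have := D.swap.arc_iff_not_arc_of_not_niche_reachable hv₁ hv h₁ hw
      tauto
  · have hw : w ∈ D.V := mem_U_of_niche_adj (D := D.swap) hu h
    exact iff_of_false
      (fun h' => D.swap.notMem_V_of_mem_U hu (D.swap.mem_V_of_arc_of_mem_U hv₁ h'))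
      (fun h' => D.swap.notMem_V_of_mem_U hw (D.swap.mem_V_of_arc_of_mem_U hv₁ h'))

theorem arc_iff_of_niche_reachable {v₁ v₂ u w : α} (hv₁ : v₁ ∈ D.V) (hv₂ : v₂ ∈ D.V)
    (h₁₂ : ¬ D.niche.Reachable v₁ v₂) (h : D.niche.Reachable u w) : D.A v₁ u ↔ D.A v₁ w := by
  rw [SimpleGraph.reachable_iff_reflTransGen] at h
  induction h with
  | refl => rfl
  | tail _ hbc ih => exact ih.trans (arc_iff_of_niche_adj hv₁ hv₂ h₁₂ hbc)

theorem niche_reachable_of_mem_U (hV : D.V.Nonempty) {x y u : α} (hx : x ∈ D.U) (hy : y ∈ D.U)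
    (hu : u ∈ D.U) (hxy : x ≠ y) (hr : D.niche.Reachable x y) (hn : ¬ D.niche.Adj x y) :
    D.niche.Reachable x u := by
  by_contra hxu
  have hyu : ¬ D.niche.Reachable y u := fun h => hxu (hr.trans h)
  exact hyu (niche_adj_of_not_niche_adj hV hx hy hu hxy (fun h => hxu (h ▸ .rfl))
    (fun h => hyu (h ▸ .rfl)) hn (fun h => hxu h.reachable)).reachable

theorem card_connectedComponent_niche_le_two_of_mem_U (hV : D.V.Nonempty) {x y : α}
    (hx : x ∈ D.U) (hxy : x ≠ y) (hr : D.niche.Reachable x y) (hn : ¬ D.niche.Adj x y) :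
    Nat.card D.niche.ConnectedComponent ≤ 2 := by
  have hy := mem_U_of_niche_reachable hx hr
  have hxV : ∀ {v}, ¬ D.niche.Reachable v x → v ∈ D.V := fun h =>
    (D.mem_U_or_mem_V _).resolve_left fun hv =>
      h (niche_reachable_of_mem_U hV hx hy hv hxy hr hn).symm
  have hcomp : ∀ {v₁ v₂}, ¬ D.niche.Reachable v₁ x → ¬ D.niche.Reachable v₂ x →
      D.niche.Reachable v₁ v₂ := by
    intro v₁ v₂ h₁ h₂
    by_contra h₁₂
    have hxy₁ := arc_iff_of_niche_reachable (hxV h₁) (hxV h₂) h₁₂ hr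
    have hxy₂ := arc_iff_not_arc_of_not_niche_adj hx hy hxy hn (hxV h₁)
    rw [← not_iff_not, ← D.arc_iff_not_arc hx (hxV h₁), ← D.arc_iff_not_arc hy (hxV h₁)] at hxy₂
    tauto
  classical
  refine (Nat.card_le_card_of_injective (fun c => decide (c = D.niche.connectedComponentMk x))
    ?_).trans (by simp)
  refine SimpleGraph.ConnectedComponent.ind₂ fun v₁ v₂ h => SimpleGraph.ConnectedComponent.eq.2 ?_
  simp only [decide_eq_decide, SimpleGraph.ConnectedComponent.eq] at h
  by_cases h₁ : D.niche.Reachable v₁ x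
  · exact h₁.trans (h.1 h₁).symm
  · exact hcomp h₁ (mt h.2 h₁)

theorem card_connectedComponent_niche_le_two (hU : D.U.Nonempty) (hV : D.V.Nonempty) {x y : α}
    (hxy : x ≠ y) (hr : D.niche.Reachable x y) (hn : ¬ D.niche.Adj x y) :
    Nat.card D.niche.ConnectedComponent ≤ 2 := by
  rcases D.mem_U_or_mem_V x with hx | hx
  · exact card_connectedComponent_niche_le_two_of_mem_U hV hx hxy hr hn
  · exact card_connectedComponent_niche_le_two_of_mem_U (D := D.swap) hU hx hxy hr hn

def cyclic (f : α → Fin 4) : BipTournament α where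
  U := {a | f a = 0 ∨ f a = 2}
  V := {a | f a = 1 ∨ f a = 3}
  A a b := f b = f a + 1
  disj := Set.disjoint_left.2 fun {a} => by
    simp only [Set.mem_ofPred_eq]
    generalize f a = i
    revert i
    decide
  cover := Set.eq_univ_of_forall fun a => by
    simp only [Set.mem_union, Set.mem_ofPred_eq]
    generalize f a = i
    revert i
    decide
  orient u hu v hv := by
    simp only [Set.mem_ofPred_eq] at hu hv
    show Xor _ _
    generalize f u = i, f v = j at *
    revert i j
    decide
  arcs a b h := by
    simp only [Set.mem_ofPred_eq]
    generalize f a = i, f b = j at *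
    revert i j
    decide

theorem cyclic_niche_adj_iff {f : α → Fin 4} (h₁ : 1 ∈ Set.range f) (h₂ : 2 ∈ Set.range f)
    {x y : α} : (cyclic f).niche.Adj x y ↔ x ≠ y ∧ f x = f y := by
  refine and_congr_right fun _ => ⟨?_, fun hxy => ?_⟩
  · rintro (⟨w, hx, hy⟩ | ⟨w, hx, hy⟩)
    · exact add_right_cancel (hx.symm.trans hy)
    · exact hx.trans hy.symm
  · obtain ⟨w₁, hw₁⟩ := h₁
    obtain ⟨w₂, hw₂⟩ := h₂
    simp only [cyclic, ← hxy, and_self]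
    have hnbr : ∀ i : Fin 4, i + 1 = 1 ∨ i + 1 = 2 ∨ i = 1 + 1 ∨ i = 2 + 1 := by decide
    rcases hnbr (f x) with h | h | h | h
    · exact .inl ⟨w₁, hw₁.trans h.symm⟩
    · exact .inl ⟨w₂, hw₂.trans h.symm⟩
    · exact .inr ⟨w₁, hw₁ ▸ h⟩
    · exact .inr ⟨w₂, hw₂ ▸ h⟩

theorem exists_niche_eq_of_reachable_imp_adj {G : SimpleGraph α}
    (hG : ∀ x y : α, G.Reachable x y → x ≠ y → G.Adj x y) {g : G.ConnectedComponent → Fin 4}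
    (hg : Function.Injective g) (h₁ : 1 ∈ Set.range g) (h₂ : 2 ∈ Set.range g) :
    ∃ D : BipTournament α, D.U.Nonempty ∧ D.V.Nonempty ∧ D.niche = G := by
  set f := g ∘ G.connectedComponentMk
  have hf : Set.range f = Set.range g := Function.Surjective.range_comp Quot.mk_surjective g
  rw [← hf] at h₁ h₂
  obtain ⟨u, hu⟩ := h₂
  obtain ⟨v, hv⟩ := h₁
  refine ⟨cyclic f, ⟨u, .inr hu⟩, ⟨v, .inl hv⟩, ?_⟩
  ext x y
  have hfxy : f x = f y ↔ G.Reachable x y := hg.eq_iff.trans SimpleGraph.ConnectedComponent.eq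
  rw [cyclic_niche_adj_iff ⟨v, hv⟩ ⟨u, hu⟩, hfxy]
  exact ⟨fun ⟨hxy, hr⟩ => hG x y hr hxy, fun h => ⟨h.ne, h.reachable⟩⟩

end BipTournament

theorem stmt16_general {α : Type*} (G : SimpleGraph α)
    (h : Nat.card G.ConnectedComponent = 3 ∨ Nat.card G.ConnectedComponent = 4) :
    (∃ D : BipTournament α, D.U.Nonempty ∧ D.V.Nonempty ∧ D.niche = G) ↔
      (∀ x y : α, G.Reachable x y → x ≠ y → G.Adj x y) := by
  constructor
  · rintro ⟨D, hU, hV, rfl⟩ x y hr hxy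
    by_contra hn
    have := D.card_connectedComponent_niche_le_two hU hV hxy hr hn
    omega
  · intro hG
    have : Finite G.ConnectedComponent := Nat.finite_of_card_ne_zero (by omega)
    rcases h with h | h
    · let e := Finite.equivFinOfCardEq h
      exact BipTournament.exists_niche_eq_of_reachable_imp_adj hG
        ((Fin.castSucc_injective 3).comp e.injective) ⟨e.symm 1, by simp⟩ ⟨e.symm 2, by simp⟩
    · let e := Finite.equivFinOfCardEq h
      exact BipTournament.exists_niche_eq_of_reachable_imp_adj hG e.injective
        ⟨e.symm 1, by simp⟩ ⟨e.symm 2, by simp⟩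

theorem stmt16 {α : Type*} [Fintype α] (G : SimpleGraph α)
    (h : Nat.card G.ConnectedComponent = 3 ∨ Nat.card G.ConnectedComponent = 4) :
    (∃ D : BipTournament α, D.U.Nonempty ∧ D.V.Nonempty ∧ D.niche = G) ↔
      (∀ x y : α, G.Reachable x y → x ≠ y → G.Adj x y) :=
  stmt16_general G h
end
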